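/- The following three subsets of ℂ^{d+1} coincide: (1) Z_{1+} = {exp(τM)c : M ∈ C₁, c ∈ X_d, Im τ > 0}; (2) A₁ = {x+iy : x,y ∈ ℝ^{d+1}, ⟨x,x⟩ − ⟨y,y⟩ = 1, ⟨x,y⟩ = 0, ⟨y,y⟩ > 0, y⁰x^d − x⁰y^d > 0}; (3) {Λ exp(it M_{0d}) e_d : Λ ∈ G₀, t > 0}. -/

import Mathlib

noncomputable section
open Matrix Complex

namespace AdS

/-- The metric signs: +1 for indices 0 and d, −1 otherwise. -/
def eta (d : ℕ) (μ : Fin (d+1)) : ℝ := if μ = 0 ∨ μ = Fin.last d then 1 else -1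

/-- The AdS bilinear form on ℝ^{d+1}. -/
def formR (d : ℕ) (x y : Fin (d+1) → ℝ) : ℝ := ∑ μ, eta d μ * x μ * y μ

/-- The ℂ-bilinear extension of the AdS form to ℂ^{d+1}. -/
def formC (d : ℕ) (z w : Fin (d+1) → ℂ) : ℂ := ∑ μ, (eta d μ : ℂ) * z μ * w μ

/-- The real AdS quadric. -/
def Xd (d : ℕ) : Set (Fin (d+1) → ℝ) := {x | formR d x x = 1}

/-- The complex AdS quadric. -/
def XdC (d : ℕ) : Set (Fin (d+1) → ℂ) := {z | formC d z z = 1}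

/-- ℓ(a∧b) : x ↦ ⟨b,x⟩a − ⟨a,x⟩b as a matrix. -/
def ell (d : ℕ) (a b : Fin (d+1) → ℝ) : Matrix (Fin (d+1)) (Fin (d+1)) ℝ :=
  Matrix.of fun i j => eta d j * (b j * a i - a j * b i)

/-- The AdS group. -/
def Ggrp (d : ℕ) : Set (Matrix (Fin (d+1)) (Fin (d+1)) ℝ) :=
  {Λ | ∀ x y, formR d (Λ.mulVec x) (Λ.mulVec y) = formR d x y}

/-- The connected component of the identity of the AdS group. -/
def G0 (d : ℕ) : Set (Matrix (Fin (d+1)) (Fin (d+1)) ℝ) :=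
  connectedComponentIn (Ggrp d) 1

/-- The set C₁ of Lie algebra generators. -/
def C1 (d : ℕ) : Set (Matrix (Fin (d+1)) (Fin (d+1)) ℝ) :=
  {M | ∃ a b : Fin (d+1) → ℝ, formR d a a = 1 ∧ formR d b b = 1 ∧ formR d a b = 0 ∧
    0 < a 0 * b (Fin.last d) - a (Fin.last d) * b 0 ∧ M = ell d a b}

/-- The cone C₊ generated by C₁. -/
def Cplus (d : ℕ) : Set (Matrix (Fin (d+1)) (Fin (d+1)) ℝ) :=
  {M | ∃ ρ : ℝ, 0 < ρ ∧ ∃ N ∈ C1 d, M = ρ • N}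

/-- A real matrix viewed as a complex one. -/
def toC (d : ℕ) (M : Matrix (Fin (d+1)) (Fin (d+1)) ℝ) : Matrix (Fin (d+1)) (Fin (d+1)) ℂ :=
  M.map Complex.ofReal

/-- A real vector viewed as a complex one. -/
def toCv (d : ℕ) (x : Fin (d+1) → ℝ) : Fin (d+1) → ℂ := fun μ => (x μ : ℂ)

/-- The generator M₀d = ℓ(e₀ ∧ e_d). -/
def M0d (d : ℕ) : Matrix (Fin (d+1)) (Fin (d+1)) ℝ :=
  ell d (Pi.single 0 1) (Pi.single (Fin.last d) 1)

/-- The future tuboid Z₁₊ of the complex AdS quadric. -/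
def Z1plus (d : ℕ) : Set (Fin (d+1) → ℂ) :=
  {z | ∃ M ∈ C1 d, ∃ c ∈ Xd d, ∃ τ : ℂ, 0 < τ.im ∧
    z = (NormedSpace.exp (τ • toC d M)).mulVec (toCv d c)}

/-- The past tuboid Z₁₋ of the complex AdS quadric. -/
def Z1minus (d : ℕ) : Set (Fin (d+1) → ℂ) :=
  {z | ∃ M ∈ C1 d, ∃ c ∈ Xd d, ∃ τ : ℂ, τ.im < 0 ∧
    z = (NormedSpace.exp (τ • toC d M)).mulVec (toCv d c)}
/-- The set A₁ = {x+iy : ⟨x,x⟩−⟨y,y⟩ = 1, ⟨x,y⟩ = 0, ⟨y,y⟩ > 0, y⁰x^d − x⁰y^d > 0}. -/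
def A1 (d : ℕ) : Set (Fin (d+1) → ℂ) :=
  {z | formR d (fun μ => (z μ).re) (fun μ => (z μ).re)
        - formR d (fun μ => (z μ).im) (fun μ => (z μ).im) = 1 ∧
      formR d (fun μ => (z μ).re) (fun μ => (z μ).im) = 0 ∧
      0 < formR d (fun μ => (z μ).im) (fun μ => (z μ).im) ∧
      0 < (z 0).im * (z (Fin.last d)).re - (z 0).re * (z (Fin.last d)).im}

/-! On an orthonormal pair `(a, b)`, `ℓ(a∧b)` rotates the `(a, b)`-plane and kills its orthogonal
complement, so `exp(τ ℓ(a∧b)) c = c' + (α cos τ + β sin τ) a + (β cos τ - α sin τ) b` with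
`α = ⟨a,c⟩`, `β = ⟨b,c⟩` and `c' ⊥ a, b`. The real and imaginary parts then satisfy the relations
defining `A₁`; for the orientation, Cauchy–Schwarz is combined with
`wedge(a,c')² + wedge(b,c')² ≤ -⟨c',c'⟩ wedge(a,b)²`, which holds because the form is negative
semidefinite on vectors with vanishing `0`- and `d`-components.

Conversely, normalising the real and imaginary parts of a point of `A₁` gives an oriented
orthonormal pair, and `G₀` acts transitively on these: a product of two reflections maps a unit
vector `u` to a unit vector `v` with `⟨u,v⟩ ≥ 0` and is joined to `1` by an explicit path.
Finally `Λ exp(τ ℓ(a∧b)) c = exp(τ ℓ(Λa∧Λb)) Λc`, and `G₀` preserves orientation since the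
orientation of an orthonormal pair is continuous on `G` and never vanishes. -/

section
variable {d : ℕ}

lemma eta_zero : eta d 0 = 1 := by simp [eta]

lemma eta_last : eta d (Fin.last d) = 1 := by simp [eta]

lemma eta_ne_zero (μ : Fin (d+1)) : eta d μ ≠ 0 := by
  unfold eta; split_ifs <;> norm_num

lemma formR_eq_toBilin' (x y : Fin (d+1) → ℝ) :
    formR d x y = Matrix.toBilin' (Matrix.diagonal (eta d)) x y := by
  rw [Matrix.toBilin'_apply', formR, dotProduct]
  exact Finset.sum_congr rfl fun μ _ => by rw [Matrix.mulVec_diagonal]; ring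

lemma formR_comm (x y : Fin (d+1) → ℝ) : formR d x y = formR d y x := by
  unfold formR; exact Finset.sum_congr rfl fun μ _ => by ring

lemma formR_add_left (x x' y : Fin (d+1) → ℝ) :
    formR d (x + x') y = formR d x y + formR d x' y := by simp [formR_eq_toBilin']

lemma formR_add_right (x y y' : Fin (d+1) → ℝ) :
    formR d x (y + y') = formR d x y + formR d x y' := by simp [formR_eq_toBilin']

lemma formR_sub_left (x x' y : Fin (d+1) → ℝ) :
    formR d (x - x') y = formR d x y - formR d x' y := by simp [formR_eq_toBilin']

lemma formR_sub_right (x y y' : Fin (d+1) → ℝ) :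
    formR d x (y - y') = formR d x y - formR d x y' := by simp [formR_eq_toBilin']

lemma formR_smul_left (r : ℝ) (x y : Fin (d+1) → ℝ) :
    formR d (r • x) y = r * formR d x y := by simp [formR_eq_toBilin']

lemma formR_smul_right (r : ℝ) (x y : Fin (d+1) → ℝ) :
    formR d x (r • y) = r * formR d x y := by simp [formR_eq_toBilin']

lemma formR_neg_left (x y : Fin (d+1) → ℝ) : formR d (-x) y = -formR d x y := by
  simp [formR_eq_toBilin']

lemma formR_neg_right (x y : Fin (d+1) → ℝ) : formR d x (-y) = -formR d x y := by
  simp [formR_eq_toBilin']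

lemma formR_single_left (i : Fin (d+1)) (c : ℝ) (y : Fin (d+1) → ℝ) :
    formR d (Pi.single i c) y = eta d i * c * y i := by
  rw [formR, Finset.sum_eq_single i (fun μ _ hμ => by simp [hμ]) (by simp)]
  simp

lemma formR_single_right (i : Fin (d+1)) (c : ℝ) (x : Fin (d+1) → ℝ) :
    formR d x (Pi.single i c) = eta d i * c * x i := by
  rw [formR_comm, formR_single_left]

lemma formR_self_nonpos {w : Fin (d+1) → ℝ} (h0 : w 0 = 0) (hl : w (Fin.last d) = 0) :
    formR d w w ≤ 0 := by
  refine Finset.sum_nonpos fun μ _ => ?_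
  unfold eta
  split_ifs with hμ
  · rcases hμ with rfl | rfl <;> simp [h0, hl]
  · nlinarith [sq_nonneg (w μ)]

/-- The orientation of the projection of `(x, y)` to the positive `(0, d)`-plane. -/
def wedge (d : ℕ) (x y : Fin (d+1) → ℝ) : ℝ := x 0 * y (Fin.last d) - x (Fin.last d) * y 0

/-- The combination below has vanishing `0`- and `d`-components (Cramer's rule), so it lies
in the negative semidefinite part of the form. -/
lemma formR_wedge_combination_nonpos (x y v : Fin (d+1) → ℝ) :
    formR d (wedge d y v • x - wedge d x v • y + wedge d x y • v)
      (wedge d y v • x - wedge d x v • y + wedge d x y • v) ≤ 0 := by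
  apply formR_self_nonpos <;> simp only [wedge, Pi.add_apply, Pi.sub_apply, Pi.smul_apply,
    smul_eq_mul] <;> ring

def IsOrthonormalPair (d : ℕ) (x y : Fin (d+1) → ℝ) : Prop :=
  formR d x x = 1 ∧ formR d y y = 1 ∧ formR d x y = 0

lemma IsOrthonormalPair.sq_wedge_add_sq_wedge_le {a b v : Fin (d+1) → ℝ}
    (h : IsOrthonormalPair d a b) (hav : formR d a v = 0) (hbv : formR d b v = 0) :
    wedge d a v ^ 2 + wedge d b v ^ 2 + wedge d a b ^ 2 * formR d v v ≤ 0 := by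
  obtain ⟨ha, hb, hab⟩ := h
  have := formR_wedge_combination_nonpos (d := d) a b v
  simp only [formR_add_left, formR_add_right, formR_sub_left, formR_sub_right,
    formR_smul_left, formR_smul_right, formR_comm b a, formR_comm v a,
    formR_comm v b, ha, hb, hab, hav, hbv] at this
  linarith

lemma IsOrthonormalPair.wedge_ne_zero {a b : Fin (d+1) → ℝ} (h : IsOrthonormalPair d a b) :
    wedge d a b ≠ 0 := by
  obtain ⟨ha, hb, hab⟩ := h
  intro hD
  unfold wedge at hD
  have hnorm : ∀ i : Fin (d+1), formR d (a i • b - b i • a) (a i • b - b i • a)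
      = a i ^ 2 + b i ^ 2 := fun i => by
    simp only [formR_sub_left, formR_sub_right, formR_smul_left, formR_smul_right,
      formR_comm b a, ha, hb, hab]
    ring
  have h0 := hnorm 0 ▸ formR_self_nonpos (d := d) (w := a 0 • b - b 0 • a)
    (by simp; ring) (by simp; linarith)
  have hl := hnorm (Fin.last d) ▸ formR_self_nonpos (d := d)
    (w := a (Fin.last d) • b - b (Fin.last d) • a) (by simp; linarith) (by simp; ring)
  have := formR_self_nonpos (d := d) (w := a) (by nlinarith [sq_nonneg (b 0)])
    (by nlinarith [sq_nonneg (b (Fin.last d))])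
  linarith

lemma isOrthonormalPair_mulVec_iff {Λ : Matrix (Fin (d+1)) (Fin (d+1)) ℝ} (hΛ : Λ ∈ Ggrp d)
    {x y : Fin (d+1) → ℝ} : IsOrthonormalPair d (Λ *ᵥ x) (Λ *ᵥ y) ↔ IsOrthonormalPair d x y := by
  simp only [IsOrthonormalPair, show ∀ u v, formR d (Λ *ᵥ u) (Λ *ᵥ v) = formR d u v from hΛ]

lemma one_mem_Ggrp : (1 : Matrix (Fin (d+1)) (Fin (d+1)) ℝ) ∈ Ggrp d := by
  intro x y; simp

lemma mul_mem_Ggrp {A B : Matrix (Fin (d+1)) (Fin (d+1)) ℝ} (hA : A ∈ Ggrp d)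
    (hB : B ∈ Ggrp d) : A * B ∈ Ggrp d := by
  intro x y
  rw [← Matrix.mulVec_mulVec, ← Matrix.mulVec_mulVec, hA, hB]

lemma mulVec_surjective_of_mem_Ggrp {Λ : Matrix (Fin (d+1)) (Fin (d+1)) ℝ}
    (hΛ : Λ ∈ Ggrp d) : Function.Surjective Λ.mulVec := by
  refine Matrix.mulVec_surjective_iff_isUnit.2 (Matrix.mulVec_injective_iff_isUnit.1 ?_)
  refine (injective_iff_map_eq_zero' Λ.mulVecLin).2 fun x => ⟨fun hx => funext fun μ => ?_,
    fun hx => by simp [hx]⟩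
  have := hΛ x (Pi.single μ 1)
  rw [Matrix.mulVecLin_apply] at hx
  rw [hx, formR_single_right] at this
  simpa [formR, eta_ne_zero] using this.symm

lemma G0_subset_Ggrp : G0 d ⊆ Ggrp d := connectedComponentIn_subset _ _

lemma one_mem_G0 : (1 : Matrix (Fin (d+1)) (Fin (d+1)) ℝ) ∈ G0 d :=
  mem_connectedComponentIn one_mem_Ggrp

lemma mul_mem_G0 {A B : Matrix (Fin (d+1)) (Fin (d+1)) ℝ} (hA : A ∈ G0 d) (hB : B ∈ G0 d) :
    A * B ∈ G0 d := by
  have hS : IsPreconnected ((A * ·) '' G0 d) :=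
    isPreconnected_connectedComponentIn.image _ (by fun_prop)
  have hsub : (A * ·) '' G0 d ⊆ Ggrp d := by
    rintro _ ⟨C, hC, rfl⟩
    exact mul_mem_Ggrp (G0_subset_Ggrp hA) (G0_subset_Ggrp hC)
  have hA' : A ∈ (A * ·) '' G0 d := ⟨1, one_mem_G0, mul_one A⟩
  have := hS.subset_connectedComponentIn hA' hsub
  rw [← connectedComponentIn_eq hA] at this
  exact this ⟨B, hB, rfl⟩

lemma mem_G0_of_path {γ : ℝ → Matrix (Fin (d+1)) (Fin (d+1)) ℝ} (hγ : Continuous γ)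
    (h0 : γ 0 = 1) (hmem : ∀ s ∈ Set.Icc (0 : ℝ) 1, γ s ∈ Ggrp d) : γ 1 ∈ G0 d :=
  (isPreconnected_Icc.image γ hγ.continuousOn).subset_connectedComponentIn
    ⟨0, Set.left_mem_Icc.2 zero_le_one, h0⟩
    (Set.image_subset_iff.2 hmem : γ '' Set.Icc 0 1 ⊆ Ggrp d)
    ⟨1, Set.right_mem_Icc.2 zero_le_one, rfl⟩

lemma pos_iff_pos_of_isPreconnected {X : Type*} [TopologicalSpace X] {S : Set X}
    (hS : IsPreconnected S) {f : X → ℝ} (hf : ContinuousOn f S) (hne : ∀ p ∈ S, f p ≠ 0)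
    {p q : X} (hp : p ∈ S) (hq : q ∈ S) : 0 < f p ↔ 0 < f q := by
  have key : ∀ {p q}, p ∈ S → q ∈ S → 0 < f p → 0 < f q := fun {p q} hp hq hfp => by
    by_contra! hfq
    obtain ⟨r, hr, hr0⟩ := hS.intermediate_value hq hp hf ⟨hfq, hfp.le⟩
    exact hne r hr hr0
  exact ⟨key hp hq, key hq hp⟩

lemma wedge_mulVec_pos_iff {Λ : Matrix (Fin (d+1)) (Fin (d+1)) ℝ} (hΛ : Λ ∈ G0 d)
    {x y : Fin (d+1) → ℝ} (h : IsOrthonormalPair d x y) :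
    0 < wedge d (Λ *ᵥ x) (Λ *ᵥ y) ↔ 0 < wedge d x y := by
  have hf : Continuous fun Γ : Matrix (Fin (d+1)) (Fin (d+1)) ℝ => wedge d (Γ *ᵥ x) (Γ *ᵥ y) := by
    unfold wedge
    have : ∀ v : Fin (d+1) → ℝ, Continuous fun Γ : Matrix (Fin (d+1)) (Fin (d+1)) ℝ => Γ *ᵥ v :=
      fun v => continuous_id.matrix_mulVec continuous_const
    fun_prop
  have := pos_iff_pos_of_isPreconnected isPreconnected_connectedComponentIn hf.continuousOn
    (fun Γ hΓ => ((isOrthonormalPair_mulVec_iff (G0_subset_Ggrp hΓ)).2 h).wedge_ne_zero)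
    hΛ (one_mem_G0 (d := d))
  simpa using this

/-- The product of the reflections in `u` and in `u + v`: for unit vectors it maps `u` to `v`
and fixes the orthogonal complement of `{u, v}`. -/
def boost (d : ℕ) (u v : Fin (d+1) → ℝ) : Matrix (Fin (d+1)) (Fin (d+1)) ℝ :=
  1 - (1 + formR d u v)⁻¹ • vecMulVec (u + v) (fun μ => eta d μ * (u + v) μ)
    + (2 : ℝ) • vecMulVec v (fun μ => eta d μ * u μ)

lemma boost_mulVec (u v x : Fin (d+1) → ℝ) :
    boost d u v *ᵥ x
      = x - (formR d (u + v) x / (1 + formR d u v)) • (u + v) + (2 * formR d u x) • v := by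
  simp only [boost, Matrix.add_mulVec, Matrix.sub_mulVec, Matrix.smul_mulVec, Matrix.one_mulVec,
    Matrix.vecMulVec_mulVec, op_smul_eq_smul, smul_smul]
  congr 2
  simp only [formR, dotProduct]
  ring_nf

lemma boost_mem_Ggrp {u v : Fin (d+1) → ℝ} (hu : formR d u u = 1) (hv : formR d v v = 1)
    (huv : 1 + formR d u v ≠ 0) : boost d u v ∈ Ggrp d := by
  intro x y
  simp only [boost_mulVec, formR_add_left, formR_add_right, formR_sub_left, formR_sub_right,
    formR_smul_left, formR_smul_right, formR_comm v u, formR_comm x u, formR_comm x v, hu, hv]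
  field_simp
  ring

lemma boost_mulVec_self {u v : Fin (d+1) → ℝ} (hu : formR d u u = 1)
    (huv : 1 + formR d u v ≠ 0) : boost d u v *ᵥ u = v := by
  rw [boost_mulVec, formR_add_left, formR_comm v u, hu, div_self (fun h => huv (by linarith)),
    one_smul]
  module

lemma boost_mulVec_of_orthogonal {u v x : Fin (d+1) → ℝ} (hux : formR d u x = 0)
    (hvx : formR d v x = 0) : boost d u v *ᵥ x = x := by
  simp [boost_mulVec, formR_add_left, hux, hvx]

lemma boost_self {u : Fin (d+1) → ℝ} (hu : formR d u u = 1) : boost d u u = 1 := by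
  refine Matrix.toLin'.injective (LinearMap.ext fun x => ?_)
  simp only [Matrix.toLin'_apply, Matrix.one_mulVec, boost_mulVec, formR_add_left, hu]
  module

lemma continuous_boost {u : Fin (d+1) → ℝ} {v : ℝ → Fin (d+1) → ℝ} (hv : Continuous v)
    (huv : ∀ s, 1 + formR d u (v s) ≠ 0) : Continuous fun s => boost d u (v s) := by
  have hform : Continuous fun s => 1 + formR d u (v s) := by unfold formR; fun_prop
  unfold boost
  have := hform.inv₀ huv
  fun_prop

/-- The path `s ↦ boost u (√(1 + s²(β² - 1)) u + s (v - β u))`, `β = ⟨u, v⟩`, joins `1` to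
`boost u v` through unit vectors `v_s` with `⟨u, v_s⟩ ≥ 0`. -/
lemma boost_mem_G0 {u v : Fin (d+1) → ℝ} (hu : formR d u u = 1) (hv : formR d v v = 1)
    (huv : 0 ≤ formR d u v) : boost d u v ∈ G0 d := by
  set β := formR d u v
  set f : ℝ → ℝ := fun s => Real.sqrt (1 + s ^ 2 * (β ^ 2 - 1))
  set w := v - β • u
  have hvw : formR d u w = 0 := by simp [w, formR_sub_right, formR_smul_right, hu, β]
  have hww : formR d w w = 1 - β ^ 2 := by
    simp only [w, formR_sub_left, formR_sub_right, formR_smul_left, formR_smul_right,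
      formR_comm v u, hu, hv, β]
    ring
  have hu_vs : ∀ s, formR d u (f s • u + s • w) = f s := fun s => by
    simp [formR_add_right, formR_smul_right, hu, hvw]
  have hpos : ∀ s, 1 + formR d u (f s • u + s • w) ≠ 0 := fun s => by
    rw [hu_vs]; positivity
  have hγ := continuous_boost (u := u) (v := fun s => f s • u + s • w) (by fun_prop) hpos
  have hmem := mem_G0_of_path hγ ?_ fun s hs => boost_mem_Ggrp hu ?_ (hpos s)
  · simpa [f, Real.sqrt_sq huv, w] using hmem
  · simp [f, boost_self hu]
  · have : 0 ≤ 1 + s ^ 2 * (β ^ 2 - 1) := by nlinarith [hs.2, hs.1, sq_nonneg β]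
    simp only [formR_add_left, formR_add_right, formR_smul_left, formR_smul_right,
      formR_comm w u, hu, hvw, hww, f]
    linear_combination Real.sq_sqrt this

lemma exists_mem_G0_mulVec_eq {u w v : Fin (d+1) → ℝ} (h : IsOrthonormalPair d u w)
    (hv : formR d v v = 1) : ∃ Λ ∈ G0 d, Λ *ᵥ u = v := by
  obtain ⟨hu, hw, huw⟩ := h
  rcases le_or_gt 0 (formR d u v) with huv | huv
  · exact ⟨boost d u v, boost_mem_G0 hu hv huv, boost_mulVec_self hu (by linarith)⟩
  -- `u ↦ w ↦ -u ↦ v`, each step a boost between vectors with nonnegative product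
  have hwu : formR d w (-u) = 0 := by rw [formR_neg_right, formR_comm, huw, neg_zero]
  have hu' : formR d (-u) (-u) = 1 := by rw [formR_neg_left, formR_neg_right, neg_neg, hu]
  have hv' : formR d (-v) (-v) = 1 := by rw [formR_neg_left, formR_neg_right, neg_neg, hv]
  have huv' : 0 < formR d u (-v) := by rw [formR_neg_right]; linarith
  refine ⟨boost d u (-v) * boost d w (-u) * boost d u w,
    mul_mem_G0 (mul_mem_G0 (boost_mem_G0 hu hv' huv'.le) (boost_mem_G0 hw hu' hwu.ge))
      (boost_mem_G0 hu hw huw.ge), ?_⟩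
  rw [← Matrix.mulVec_mulVec, ← Matrix.mulVec_mulVec, boost_mulVec_self hu (by linarith),
    boost_mulVec_self hw (by linarith), Matrix.mulVec_neg, boost_mulVec_self hu (by linarith),
    neg_neg]

lemma zero_ne_last (hd : d ≠ 0) : (0 : Fin (d+1)) ≠ Fin.last d := by
  simpa [Fin.ext_iff] using Ne.symm hd

lemma isOrthonormalPair_single_zero_last (hd : d ≠ 0) :
    IsOrthonormalPair d (Pi.single 0 1) (Pi.single (Fin.last d) 1) := by
  simp [IsOrthonormalPair, formR_single_left, eta_zero, eta_last, zero_ne_last hd]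

lemma wedge_single_zero_last (hd : d ≠ 0) :
    wedge d (Pi.single 0 1) (Pi.single (Fin.last d) 1) = 1 := by
  simp [wedge, zero_ne_last hd, (zero_ne_last hd).symm]

lemma exists_mem_G0_frame (hd : d ≠ 0) {b a : Fin (d+1) → ℝ} (h : IsOrthonormalPair d b a)
    (hor : 0 < wedge d b a) :
    ∃ Λ ∈ G0 d, Λ *ᵥ Pi.single 0 1 = b ∧ Λ *ᵥ Pi.single (Fin.last d) 1 = a := by
  have he := isOrthonormalPair_single_zero_last hd
  obtain ⟨Λ, hΛ, rfl⟩ := exists_mem_G0_mulVec_eq he h.1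
  obtain ⟨a', rfl⟩ := mulVec_surjective_of_mem_Ggrp (G0_subset_Ggrp hΛ) a
  have h' := (isOrthonormalPair_mulVec_iff (G0_subset_Ggrp hΛ)).1 h
  have ha' : 0 < formR d (Pi.single (Fin.last d) 1) a' := by
    simpa [formR_single_left, eta_last, wedge, (zero_ne_last hd).symm]
      using (wedge_mulVec_pos_iff hΛ h').1 hor
  refine ⟨Λ * boost d (Pi.single (Fin.last d) 1) a',
    mul_mem_G0 hΛ (boost_mem_G0 he.2.1 h'.2.1 ha'.le), ?_, ?_⟩
  · rw [← Matrix.mulVec_mulVec, boost_mulVec_of_orthogonal (by rw [formR_comm]; exact he.2.2)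
      (by rw [formR_comm]; exact h'.2.2)]
  · rw [← Matrix.mulVec_mulVec, boost_mulVec_self he.2.1 (by linarith)]

lemma exp_mulVec_of_mulVec_eq_smul {n : Type*} [Fintype n] [DecidableEq n]
    {A : Matrix n n ℂ} {v : n → ℂ} {μ : ℂ} (h : A *ᵥ v = μ • v) :
    NormedSpace.exp A *ᵥ v = Complex.exp μ • v := by
  let _ : NormedRing (Matrix n n ℂ) := Matrix.linftyOpNormedRing
  let _ : NormedAlgebra ℂ (Matrix n n ℂ) := Matrix.linftyOpNormedAlgebra
  have hpow : ∀ k : ℕ, A ^ k *ᵥ v = μ ^ k • v := fun k => by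
    induction k with
    | zero => simp
    | succ k ih => rw [pow_succ, ← Matrix.mulVec_mulVec, h, Matrix.mulVec_smul, ih, smul_smul,
        ← pow_succ']
  have hA := (NormedSpace.exp_series_hasSum_exp' (𝕂 := ℂ) A).map
    (Matrix.mulVec.addMonoidHomLeft v) (continuous_id.matrix_mulVec continuous_const)
  have hμ := (NormedSpace.exp_series_hasSum_exp' (𝕂 := ℂ) μ).smul_const v
  rw [← Complex.exp_eq_exp_ℂ] at hμ
  refine hA.unique ?_
  convert hμ using 2 with k
  simp [Matrix.mulVec.addMonoidHomLeft, Matrix.smul_mulVec, hpow, smul_smul]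

lemma toC_mulVec (M : Matrix (Fin (d+1)) (Fin (d+1)) ℝ) (x : Fin (d+1) → ℝ) :
    toC d M *ᵥ toCv d x = toCv d (M *ᵥ x) := by
  funext i
  simp only [toC, toCv, Matrix.mulVec, dotProduct, Matrix.map_apply]
  push_cast
  rfl

lemma ell_mulVec (a b x : Fin (d+1) → ℝ) :
    ell d a b *ᵥ x = formR d b x • a - formR d a x • b := by
  funext i
  simp only [ell, Matrix.mulVec, dotProduct, Matrix.of_apply, Pi.sub_apply, Pi.smul_apply,
    smul_eq_mul, formR, Finset.sum_mul, ← Finset.sum_sub_distrib]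
  exact Finset.sum_congr rfl fun j _ => by ring

/-- `ell a b` maps `a ↦ -b`, `b ↦ a`, so `a ∓ i b` are eigenvectors for `∓ i`; it kills
`{a, b}ᗮ`. -/
lemma exp_smul_ell_mulVec {a b : Fin (d+1) → ℝ} (h : IsOrthonormalPair d a b)
    (c : Fin (d+1) → ℝ) (σ : ℂ) :
    NormedSpace.exp (σ • toC d (ell d a b)) *ᵥ toCv d c
      = toCv d (c - formR d a c • a - formR d b c • b)
        + ((formR d a c : ℂ) * cos σ + formR d b c * sin σ) • toCv d a
        + ((formR d b c : ℂ) * cos σ - formR d a c * sin σ) • toCv d b := by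
  obtain ⟨ha, hb, hab⟩ := h
  set α := formR d a c
  set β := formR d b c
  set J := σ • toC d (ell d a b)
  have hJ : ∀ x, J *ᵥ toCv d x = σ • toCv d (formR d b x • a - formR d a x • b) := fun x => by
    rw [Matrix.smul_mulVec, toC_mulVec, ell_mulVec]
  have hminus : J *ᵥ (toCv d a - I • toCv d b) = (-σ * I) • (toCv d a - I • toCv d b) := by
    rw [Matrix.mulVec_sub, Matrix.mulVec_smul, hJ, hJ, formR_comm b a, hab, ha, hb]
    funext μ
    simp only [toCv, Pi.sub_apply, Pi.smul_apply, smul_eq_mul]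
    push_cast
    linear_combination (-σ * (b μ : ℂ)) * I_sq
  have hplus : J *ᵥ (toCv d a + I • toCv d b) = (σ * I) • (toCv d a + I • toCv d b) := by
    rw [Matrix.mulVec_add, Matrix.mulVec_smul, hJ, hJ, formR_comm b a, hab, ha, hb]
    funext μ
    simp only [toCv, Pi.add_apply, Pi.sub_apply, Pi.smul_apply, smul_eq_mul]
    push_cast
    linear_combination (-σ * (b μ : ℂ)) * I_sq
  have hzero : J *ᵥ toCv d (c - α • a - β • b) = (0 : ℂ) • toCv d (c - α • a - β • b) := by
    rw [hJ, zero_smul]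
    simp only [formR_sub_right, formR_smul_right, formR_comm b a, ha, hb, hab, α, β]
    funext μ
    simp [toCv]
  have hc : toCv d c = toCv d (c - α • a - β • b)
      + ((α + β * I) / 2) • (toCv d a - I • toCv d b)
      + ((α - β * I) / 2) • (toCv d a + I • toCv d b) := by
    funext μ
    simp only [toCv, Pi.add_apply, Pi.sub_apply, Pi.smul_apply, smul_eq_mul]
    push_cast
    linear_combination ((β : ℂ) * (b μ : ℂ)) * I_sq
  rw [hc, Matrix.mulVec_add, Matrix.mulVec_add, Matrix.mulVec_smul, Matrix.mulVec_smul,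
    exp_mulVec_of_mulVec_eq_smul hzero, exp_mulVec_of_mulVec_eq_smul hminus,
    exp_mulVec_of_mulVec_eq_smul hplus, ← cos_sub_sin_I, ← cos_add_sin_I, exp_zero, one_smul]
  funext μ
  simp only [toCv, Pi.add_apply, Pi.sub_apply, Pi.smul_apply, smul_eq_mul]
  linear_combination ((α : ℂ) * sin σ * b μ - β * cos σ * b μ - β * sin σ * a μ) * I_sq

lemma exp_smul_ell_mulVec_right {a b : Fin (d+1) → ℝ} (h : IsOrthonormalPair d a b) (σ : ℂ) :
    NormedSpace.exp (σ • toC d (ell d a b)) *ᵥ toCv d b = sin σ • toCv d a + cos σ • toCv d b := by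
  rw [exp_smul_ell_mulVec h, h.2.2, h.2.1]
  funext μ
  simp [toCv]

lemma toC_mulVec_exp_smul_ell_mulVec {Λ : Matrix (Fin (d+1)) (Fin (d+1)) ℝ} (hΛ : Λ ∈ Ggrp d)
    {a b : Fin (d+1) → ℝ} (h : IsOrthonormalPair d a b) (c : Fin (d+1) → ℝ) (σ : ℂ) :
    toC d Λ *ᵥ (NormedSpace.exp (σ • toC d (ell d a b)) *ᵥ toCv d c)
      = NormedSpace.exp (σ • toC d (ell d (Λ *ᵥ a) (Λ *ᵥ b))) *ᵥ toCv d (Λ *ᵥ c) := by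
  rw [exp_smul_ell_mulVec h, exp_smul_ell_mulVec ((isOrthonormalPair_mulVec_iff hΛ).2 h), hΛ, hΛ]
  simp only [Matrix.mulVec_add, Matrix.mulVec_sub, Matrix.mulVec_smul, toC_mulVec]

lemma mem_A1_of_re_im {a b c : Fin (d+1) → ℝ} (h : IsOrthonormalPair d a b)
    (hD : 0 < wedge d a b) (hac : formR d a c = 0) (hbc : formR d b c = 0) {p q v : ℝ}
    (hnorm : formR d c c + p ^ 2 + q ^ 2 = 1) (hv : 0 < v) {z : Fin (d+1) → ℂ}
    (hre : (fun μ => (z μ).re) = c + (Real.cosh v * p) • a + (Real.cosh v * q) • b)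
    (him : (fun μ => (z μ).im) = (Real.sinh v * q) • a - (Real.sinh v * p) • b) :
    z ∈ A1 d := by
  have hwedge := h.sq_wedge_add_sq_wedge_le hac hbc
  obtain ⟨ha, hb, hab⟩ := h
  have hcc : formR d c c ≤ 0 := by
    by_contra! hpos
    nlinarith [mul_pos (pow_pos hD 2) hpos, sq_nonneg (wedge d a c), sq_nonneg (wedge d b c)]
  have hch := Real.cosh_sq_sub_sinh_sq v
  have hsh : 0 < Real.sinh v := Real.sinh_pos_iff.2 hv
  have hch1 : 1 ≤ Real.cosh v := Real.one_le_cosh v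
  have horient : wedge d ((Real.sinh v * q) • a - (Real.sinh v * p) • b)
      (c + (Real.cosh v * p) • a + (Real.cosh v * q) • b)
      = Real.sinh v * (q * wedge d a c - p * wedge d b c
          + Real.cosh v * (p ^ 2 + q ^ 2) * wedge d a b) := by
    simp only [wedge, Pi.add_apply, Pi.sub_apply, Pi.smul_apply, smul_eq_mul]
    ring
  have hz : (z 0).im * (z (Fin.last d)).re - (z 0).re * (z (Fin.last d)).im
      = wedge d (fun μ => (z μ).im) (fun μ => (z μ).re) := by rw [wedge]; ring
  rw [A1, Set.mem_ofPred_eq, hz, hre, him, horient]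
  simp only [formR_add_left, formR_add_right, formR_sub_left, formR_sub_right,
    formR_smul_left, formR_smul_right, formR_comm b a, formR_comm c a, formR_comm c b,
    ha, hb, hab, hac, hbc]
  set A := wedge d a c
  set B := wedge d b c
  set D := wedge d a b
  set r := p ^ 2 + q ^ 2
  have hcr : formR d c c = 1 - r := by linarith
  have hr : 1 ≤ r := by linarith
  refine ⟨by linear_combination hnorm + r * hch, by ring, ?_, ?_⟩
  · nlinarith [mul_pos (mul_pos hsh hsh) (zero_lt_one.trans_le hr)]
  have hCS : (q * A - p * B) ^ 2 < (Real.cosh v * r * D) ^ 2 := calc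
    (q * A - p * B) ^ 2 ≤ r * (A ^ 2 + B ^ 2) := by nlinarith [sq_nonneg (p * A + q * B)]
    _ ≤ r * ((r - 1) * D ^ 2) := by gcongr; nlinarith
    _ < r * (r * D ^ 2) := by gcongr; nlinarith
    _ = 1 * (r * D) ^ 2 := by ring
    _ ≤ Real.cosh v ^ 2 * (r * D) ^ 2 := by gcongr; exact one_le_pow₀ hch1
    _ = (Real.cosh v * r * D) ^ 2 := by ring
  have := (abs_lt_of_sq_lt_sq' hCS (by positivity)).1
  exact mul_pos hsh (by linarith)

lemma Z1plus_subset_A1 : Z1plus d ⊆ A1 d := by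
  rintro z ⟨M, ⟨a, b, ha, hb, hab, hD, rfl⟩, c, hc, τ, hτ, rfl⟩
  have h : IsOrthonormalPair d a b := ⟨ha, hb, hab⟩
  set α := formR d a c
  set β := formR d b c
  set p := α * Real.cos τ.re + β * Real.sin τ.re
  set q := β * Real.cos τ.re - α * Real.sin τ.re
  refine mem_A1_of_re_im h hD (c := c - α • a - β • b) (p := p) (q := q) ?_ ?_ ?_ hτ ?_ ?_
  · simp [formR_sub_right, formR_smul_right, ha, hab, α]
  · simp [formR_sub_right, formR_smul_right, formR_comm b a, hb, hab, β]
  · have hc' : formR d c c = 1 := hc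
    simp only [formR_sub_left, formR_sub_right, formR_smul_left, formR_smul_right,
      formR_comm b a, formR_comm c a, formR_comm c b, ha, hb, hab, hc', p, q, α, β]
    linear_combination (α ^ 2 + β ^ 2) * Real.sin_sq_add_cos_sq τ.re
  all_goals
    funext μ
    simp [exp_smul_ell_mulVec h, toCv, cos_eq τ, sin_eq τ, cos_ofReal_re, sin_ofReal_re,
      sinh_ofReal_re, p, q, α, β]
    ring

def G0Orbit (d : ℕ) : Set (Fin (d+1) → ℂ) :=
  {z | ∃ Λ ∈ G0 d, ∃ t : ℝ, 0 < t ∧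
      z = (toC d Λ).mulVec ((NormedSpace.exp
        ((t * Complex.I) • toC d (M0d d))).mulVec
          (toCv d (Pi.single (Fin.last d) 1 : Fin (d+1) → ℝ)))}

lemma G0Orbit_subset_Z1plus (hd : d ≠ 0) : G0Orbit d ⊆ Z1plus d := by
  rintro z ⟨Λ, hΛ, t, ht, rfl⟩
  have he := isOrthonormalPair_single_zero_last hd
  have hΛG := G0_subset_Ggrp hΛ
  obtain ⟨h0, hl, h0l⟩ := (isOrthonormalPair_mulVec_iff hΛG).2 he
  refine ⟨_, ⟨_, _, h0, hl, h0l, ?_, rfl⟩, _, hl, t * I, by simpa using ht,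
    toC_mulVec_exp_smul_ell_mulVec hΛG he _ _⟩
  exact (wedge_mulVec_pos_iff hΛ he).2 (by rw [wedge_single_zero_last hd]; exact one_pos)

lemma A1_subset_G0Orbit (hd : d ≠ 0) : A1 d ⊆ G0Orbit d := by
  rintro z ⟨hnorm, horth, hpos, hor⟩
  set x : Fin (d+1) → ℝ := fun μ => (z μ).re
  set y : Fin (d+1) → ℝ := fun μ => (z μ).im
  set l := formR d y y
  have hs : 0 < √l := Real.sqrt_pos.2 hpos
  have hs' : 0 < √(1 + l) := Real.sqrt_pos.2 (by linarith)
  have hpair : IsOrthonormalPair d ((√l)⁻¹ • y) ((√(1 + l))⁻¹ • x) := by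
    refine ⟨?_, ?_, ?_⟩ <;> simp only [formR_smul_left, formR_smul_right, formR_comm y x, horth]
    · field_simp; rw [Real.sq_sqrt hpos.le]
    · field_simp; rw [Real.sq_sqrt (by linarith)]; linarith
    · ring
  have hwedge : 0 < wedge d ((√l)⁻¹ • y) ((√(1 + l))⁻¹ • x) := by
    have : wedge d ((√l)⁻¹ • y) ((√(1 + l))⁻¹ • x) = (√l)⁻¹ * (√(1 + l))⁻¹ *
        ((z 0).im * (z (Fin.last d)).re - (z 0).re * (z (Fin.last d)).im) := by
      simp only [wedge, Pi.smul_apply, smul_eq_mul, x, y]; ring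
    rw [this]; positivity
  obtain ⟨Λ, hΛ, h0, hl⟩ := exists_mem_G0_frame hd hpair hwedge
  refine ⟨Λ, hΛ, Real.arsinh √l, Real.arsinh_pos_iff.2 hs, ?_⟩
  rw [M0d, toC_mulVec_exp_smul_ell_mulVec (G0_subset_Ggrp hΛ)
    (isOrthonormalPair_single_zero_last hd), h0, hl, exp_smul_ell_mulVec_right hpair,
    sin_mul_I, cos_mul_I, ← ofReal_sinh, ← ofReal_cosh, Real.sinh_arsinh, Real.cosh_arsinh,
    Real.sq_sqrt hpos.le]
  funext μ
  apply Complex.ext <;> simp [toCv, x, y, hs.ne', hs'.ne']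

end

/-- the three descriptions of the future tuboid coincide:
`Z₁₊ = A₁ = {Λ exp(itM₀d) e_d : Λ ∈ G₀, t > 0}`. -/
theorem Z1plus_characterizations (d : ℕ) (hd : 2 ≤ d) :
    Z1plus d = A1 d ∧
    Z1plus d = {z | ∃ Λ ∈ G0 d, ∃ t : ℝ, 0 < t ∧
      z = (toC d Λ).mulVec ((NormedSpace.exp
        ((t * Complex.I) • toC d (M0d d))).mulVec
          (toCv d (Pi.single (Fin.last d) 1 : Fin (d+1) → ℝ)))} := by
  have hd : d ≠ 0 := by omega
  have hZA : Z1plus d ⊆ A1 d := Z1plus_subset_A1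
  have hAO : A1 d ⊆ G0Orbit d := A1_subset_G0Orbit hd
  have hOZ : G0Orbit d ⊆ Z1plus d := G0Orbit_subset_Z1plus hd
  exact ⟨hZA.antisymm (hAO.trans hOZ), (hZA.trans hAO).antisymm hOZ⟩

end AdS
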